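/- arXiv:2112.12642 — 4 statements merged into one kernel-verified Lean document; each statement's English description precedes it below -/
import Mathlib

section
/- For the three-species GLV system, all eigenvalues of the Jacobian at the coexistence equilibrium s* = (ρ/(γ+c+e))·(1,1,1) have negative real part if and only if γ > (c+e)/2 (assuming ρ, γ, c, e > 0). In particular, at γ = (c+e)/2 the Jacobian has a purely imaginary conjugate pair of eigenvalues provided c ≠ e. -/
/-- The three-species generalized Lotka-Volterra vector field. -/
noncomputable def glv3 (ρ γ c e : ℝ) (s : Fin 3 → ℝ) (i : Fin 3) : ℝ :=
  ρ * s i - γ * (s i) ^ 2 - s i * (c * s (i + 1) + e * s (i + 2))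

/-- The Jacobian matrix of the vector field at a point. -/
noncomputable def glv3Jac (ρ γ c e : ℝ) (p : Fin 3 → ℝ) :
    Matrix (Fin 3) (Fin 3) ℝ :=
  fun i j => fderiv ℝ (fun s => glv3 ρ γ c e s i) p (Pi.single j 1)

/-- The complexified Jacobian at the coexistence equilibrium, as a function of γ. -/
noncomputable def coexJac (ρ c e : ℝ) (γ : ℝ) : Matrix (Fin 3) (Fin 3) ℂ :=
  (glv3Jac ρ γ c e (fun _ => ρ / (γ + c + e))).map Complex.ofReal

/-
At the symmetric equilibrium `s = ρ / (γ + c + e)` the Jacobian is the circulant matrix with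
first row `(ρ - (2γ + c + e) s, -c s, -e s)`. A 3 × 3 circulant with entries `a, b, c` has the
eigenvalues `a + ω^k b + ω^(2k) c` for the cube roots of unity `ω^k`; here they are `-ρ` and a
complex-conjugate pair with real part `s ((c + e) / 2 - γ)` and imaginary part
`± (√3 / 2) s (c - e)`. Since `s > 0`, the pair has negative real part exactly when
`γ > (c + e) / 2`.
-/

open Matrix Complex ComplexConjugate

theorem det_scalar_sub_circulant_fin_three {R : Type*} [CommRing R] {ω : R}
    (hω : ω ^ 2 + ω + 1 = 0) (a b c z : R) :
    (scalar (Fin 3) z - circulant ![a, b, c]).det =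
      (z - (a + b + c)) * (z - (a + ω * b + ω ^ 2 * c)) * (z - (a + ω ^ 2 * b + ω * c)) := by
  rw [det_fin_three]
  simp only [scalar_apply, Matrix.sub_apply, diagonal_apply_eq, diagonal_apply_ne, circulant_apply,
    Fin.isValue, Fin.reduceEq, Fin.reduceSub, sub_self, cons_val_zero, cons_val_one, cons_val,
    ne_eq, not_false_eq_true, zero_sub, sub_zero, mul_neg, neg_mul, neg_neg]
  -- the coefficient is the quotient of the difference of the two sides by `ω ^ 2 + ω + 1`
  linear_combination
    (-(z - (a + b + c)) *
      (a * b + a * c + (b ^ 2 + c ^ 2) * (ω - 1) + b * c * (1 + ω ^ 2 - ω) - (b + c) * z)) * hω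

theorem mem_spectrum_circulant_fin_three {K : Type*} [Field K] {ω : K}
    (hω : ω ^ 2 + ω + 1 = 0) (a b c z : K) :
    z ∈ spectrum K (circulant ![a, b, c]) ↔
      z = a + b + c ∨ z = a + ω * b + ω ^ 2 * c ∨ z = a + ω ^ 2 * b + ω * c := by
  rw [mem_spectrum_iff_isRoot_charpoly, Polynomial.IsRoot.def, eval_charpoly,
    det_scalar_sub_circulant_fin_three hω]
  simp only [mul_eq_zero, sub_eq_zero, or_assoc]

theorem glv3_hasFDerivAt (ρ γ c e : ℝ) (p : Fin 3 → ℝ) (i : Fin 3) :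
    HasFDerivAt (𝕜 := ℝ) (fun s => glv3 ρ γ c e s i)
      ((ρ - 2 * γ * p i - (c * p (i + 1) + e * p (i + 2))) • ContinuousLinearMap.proj i -
        p i • (c • ContinuousLinearMap.proj (i + 1) + e • ContinuousLinearMap.proj (i + 2))) p := by
  have hproj (k : Fin 3) := hasFDerivAt_apply (𝕜 := ℝ) k p
  have h := ((hproj i).const_mul ρ).sub (((hproj i).pow 2).const_mul γ) |>.sub
    ((hproj i).mul (((hproj (i + 1)).const_mul c).add ((hproj (i + 2)).const_mul e)))
  refine h.congr_fderiv ?_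
  ext v
  simp only [nsmul_eq_mul, Nat.cast_ofNat, Nat.add_one_sub_one, pow_one, smul_add, Pi.add_apply,
    _root_.sub_apply, _root_.smul_apply, _root_.add_apply,
    ContinuousLinearMap.proj_apply, smul_eq_mul]
  ring

theorem glv3Jac_apply (ρ γ c e : ℝ) (p : Fin 3 → ℝ) (i j : Fin 3) :
    glv3Jac ρ γ c e p i j =
      (ρ - 2 * γ * p i - (c * p (i + 1) + e * p (i + 2))) * (Pi.single j 1 : Fin 3 → ℝ) i -
        p i * (c * (Pi.single j 1 : Fin 3 → ℝ) (i + 1) +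
          e * (Pi.single j 1 : Fin 3 → ℝ) (i + 2)) := by
  simp [glv3Jac, (glv3_hasFDerivAt ρ γ c e p i).fderiv, mul_add]

theorem glv3Jac_const (ρ γ c e s : ℝ) :
    glv3Jac ρ γ c e (fun _ => s) = circulant ![ρ - (2 * γ + c + e) * s, -(e * s), -(c * s)] := by
  ext i j
  rw [glv3Jac_apply, circulant_apply]
  fin_cases i <;> fin_cases j <;> simp <;> ring

noncomputable def cubeRootOfUnity : ℂ := ⟨-1 / 2, √3 / 2⟩

theorem cubeRootOfUnity_sq : cubeRootOfUnity ^ 2 = conj cubeRootOfUnity := by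
  have h3 : √3 ^ 2 = 3 := Real.sq_sqrt (by norm_num)
  apply Complex.ext
  · simp only [cubeRootOfUnity, sq, mul_re, conj_re]
    linear_combination (-1 / 4 : ℝ) * h3
  · simp only [cubeRootOfUnity, sq, mul_im, conj_im]
    ring

theorem cubeRootOfUnity_sq_add_self_add_one : cubeRootOfUnity ^ 2 + cubeRootOfUnity + 1 = 0 := by
  rw [cubeRootOfUnity_sq]
  apply Complex.ext <;> simp [cubeRootOfUnity]

theorem mem_spectrum_circulant_ofReal_fin_three (a b c : ℝ) (z : ℂ) :
    z ∈ spectrum ℂ (circulant ![(a : ℂ), b, c]) ↔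
      z = ↑(a + b + c) ∨ z = ⟨a - (b + c) / 2, √3 / 2 * (b - c)⟩ ∨
        z = conj ⟨a - (b + c) / 2, √3 / 2 * (b - c)⟩ := by
  have hμ : (a : ℂ) + cubeRootOfUnity * b + conj cubeRootOfUnity * c =
      ⟨a - (b + c) / 2, √3 / 2 * (b - c)⟩ := by
    apply Complex.ext <;>
      simp only [cubeRootOfUnity, add_re, add_im, mul_re, mul_im, ofReal_re, ofReal_im, conj_re,
        conj_im] <;> ring
  rw [mem_spectrum_circulant_fin_three cubeRootOfUnity_sq_add_self_add_one, cubeRootOfUnity_sq,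
    ← hμ]
  simp

noncomputable def coexEigenvalue (ρ c e γ : ℝ) : ℂ :=
  ⟨ρ / (γ + c + e) * ((c + e) / 2 - γ), ρ / (γ + c + e) * (√3 / 2 * (c - e))⟩

theorem mem_spectrum_coexJac {ρ c e γ : ℝ} (h : γ + c + e ≠ 0) (z : ℂ) :
    z ∈ spectrum ℂ (coexJac ρ c e γ) ↔
      z = -ρ ∨ z = coexEigenvalue ρ c e γ ∨ z = conj (coexEigenvalue ρ c e γ) := by
  set s := ρ / (γ + c + e) with hs
  have hρ : ρ = s * (γ + c + e) := (div_mul_cancel₀ ρ h).symm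
  have hmap : coexJac ρ c e γ =
      circulant ![((ρ - (2 * γ + c + e) * s : ℝ) : ℂ), ((-(e * s) : ℝ) : ℂ),
        ((-(c * s) : ℝ) : ℂ)] := by
    rw [coexJac, glv3Jac_const, map_circulant]
    congr 1
    ext i
    fin_cases i <;> rfl
  have hsum : ρ - (2 * γ + c + e) * s + -(e * s) + -(c * s) = -ρ := by linear_combination 2 * hρ
  have hμ : (⟨ρ - (2 * γ + c + e) * s - (-(e * s) + -(c * s)) / 2,
      √3 / 2 * (-(e * s) - -(c * s))⟩ : ℂ) = coexEigenvalue ρ c e γ := by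
    apply Complex.ext
    · simp only [coexEigenvalue, ← hs]; linear_combination hρ
    · simp only [coexEigenvalue, ← hs]; ring
  rw [hmap, mem_spectrum_circulant_ofReal_fin_three, hsum, hμ, ofReal_neg]

theorem coexJac_stable_iff {ρ c e γ : ℝ} (hρ : 0 < ρ) (h : γ + c + e ≠ 0) :
    (∀ z ∈ spectrum ℂ (coexJac ρ c e γ), z.re < 0) ↔ (coexEigenvalue ρ c e γ).re < 0 := by
  simp only [mem_spectrum_coexJac h, forall_eq_or_imp, forall_eq, neg_re, ofReal_re, conj_re,
    neg_lt_zero, hρ, true_and, and_self]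

theorem coexEigenvalue_re_neg_iff {ρ c e γ : ℝ} (hρ : 0 < ρ) (h : 0 < γ + c + e) :
    (coexEigenvalue ρ c e γ).re < 0 ↔ (c + e) / 2 < γ :=
  (smul_neg_iff_of_pos_left (div_pos hρ h)).trans sub_neg

theorem coexistence_stability_iff (ρ c e : ℝ) (hρ : 0 < ρ) (hc : 0 < c) (he : 0 < e) :
    (∀ γ : ℝ, 0 < γ →
      ((∀ z ∈ spectrum ℂ (coexJac ρ c e γ), z.re < 0) ↔ γ > (c + e) / 2)) ∧
    (c ≠ e →
      ∃ z ∈ spectrum ℂ (coexJac ρ c e ((c + e) / 2)),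
        z.re = 0 ∧ z.im ≠ 0 ∧ (starRingEnd ℂ) z ∈ spectrum ℂ (coexJac ρ c e ((c + e) / 2))) := by
  refine ⟨fun γ hγ => ?_, fun hce => ?_⟩
  · have hsum : 0 < γ + c + e := by positivity
    exact (coexJac_stable_iff hρ hsum.ne').trans (coexEigenvalue_re_neg_iff hρ hsum)
  · have hsum : 0 < (c + e) / 2 + c + e := by positivity
    have hspec := mem_spectrum_coexJac (ρ := ρ) hsum.ne'
    refine ⟨coexEigenvalue ρ c e ((c + e) / 2), (hspec _).2 (.inr (.inl rfl)), ?_, ?_,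
      (hspec _).2 (.inr (.inr rfl))⟩
    · simp [coexEigenvalue]
    · have hsub : c - e ≠ 0 := sub_ne_zero.2 hce
      simp only [coexEigenvalue]
      positivity
end

section
/- For the three-species GLV system with γ = (c+e)/2, the sum S(t) = s₁(t) + s₂(t) + s₃(t) satisfies the logistic equation dS/dt = ρS − γS². In particular, the plane {s ∈ ℝ³ : s₁ + s₂ + s₃ = ρ/γ} is invariant under the flow. -/
theorem sum_glv3 {ρ γ c e : ℝ} (hγ : γ = (c + e) / 2) (s : Fin 3 → ℝ) :
    ∑ i, glv3 ρ γ c e s i = ρ * ∑ i, s i - γ * (∑ i, s i) ^ 2 := by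
  simp only [glv3, Fin.sum_univ_three, Fin.reduceAdd]
  subst hγ
  ring

theorem eq_zero_of_hasDerivAt_eq_mul_self {u a : ℝ → ℝ} (ha : Continuous a)
    (hu : ∀ t, HasDerivAt u (a t * u t) t) {t₀ : ℝ} (h₀ : u t₀ = 0) (t : ℝ) : u t = 0 := by
  set A : ℝ → ℝ := fun t => ∫ τ in t₀..t, a τ
  have hA : ∀ t, HasDerivAt A (a t) t := fun t =>
    intervalIntegral.integral_hasDerivAt_right (ha.intervalIntegrable _ _)
      (ha.stronglyMeasurableAtFilter _ _) ha.continuousAt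
  have hconst : ∀ t, HasDerivAt (fun τ => u τ * Real.exp (-A τ)) 0 t := fun t => by
    refine ((hu t).fun_mul (hA t).neg.exp).congr_deriv ?_
    simp only [Pi.neg_apply]
    ring
  have := is_const_of_deriv_eq_zero (fun t => (hconst t).differentiableAt)
    (fun t => (hconst t).deriv) t t₀
  simpa [h₀, Real.exp_ne_zero] using this

theorem eq_of_hasDerivAt_logistic {ρ γ : ℝ} (hγ : γ ≠ 0) {S : ℝ → ℝ}
    (hS : ∀ t, HasDerivAt S (ρ * S t - γ * S t ^ 2) t) {t₀ : ℝ} (h₀ : S t₀ = ρ / γ)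
    (t : ℝ) : S t = ρ / γ := by
  have hSc : Continuous S := continuous_iff_continuousAt.2 fun t => (hS t).continuousAt
  have hu : ∀ t, HasDerivAt (fun τ => S τ - ρ / γ) (-γ * S t * (S t - ρ / γ)) t := fun t => by
    refine ((hS t).sub_const (ρ / γ)).congr_deriv ?_
    field_simp
    ring
  exact sub_eq_zero.1 <| eq_zero_of_hasDerivAt_eq_mul_self (continuous_const.mul hSc) hu
    (sub_eq_zero.2 h₀) t

theorem sum_satisfies_logistic_and_plane_invariant_general (ρ c e : ℝ)
    (hc : 0 < c) (he : 0 < e)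
    (γ : ℝ) (hγ : γ = (c + e) / 2)
    (s : ℝ → Fin 3 → ℝ)
    (hsol : ∀ t : ℝ, ∀ i : Fin 3,
      HasDerivAt (fun τ => s τ i) (glv3 ρ γ c e (s t) i) t) :
    (∀ t : ℝ, HasDerivAt (fun τ => ∑ i, s τ i)
        (ρ * (∑ i, s t i) - γ * (∑ i, s t i) ^ 2) t) ∧
    ((∑ i, s 0 i) = ρ / γ → ∀ t : ℝ, (∑ i, s t i) = ρ / γ) := by
  have hsum : ∀ t, HasDerivAt (fun τ => ∑ i, s τ i)
      (ρ * (∑ i, s t i) - γ * (∑ i, s t i) ^ 2) t := fun t =>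
    sum_glv3 hγ (s t) ▸ HasDerivAt.fun_sum fun i _ => hsol t i
  have hγ₀ : γ ≠ 0 := by rw [hγ]; positivity
  exact ⟨hsum, eq_of_hasDerivAt_logistic hγ₀ hsum⟩

theorem sum_satisfies_logistic_and_plane_invariant (ρ c e : ℝ)
    (hρ : 0 < ρ) (hc : 0 < c) (he : 0 < e)
    (γ : ℝ) (hγ : γ = (c + e) / 2)
    (s : ℝ → Fin 3 → ℝ)
    (hsol : ∀ t : ℝ, ∀ i : Fin 3,
      HasDerivAt (fun τ => s τ i) (glv3 ρ γ c e (s t) i) t) :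
    (∀ t : ℝ, HasDerivAt (fun τ => ∑ i, s τ i)
        (ρ * (∑ i, s t i) - γ * (∑ i, s t i) ^ 2) t) ∧
    ((∑ i, s 0 i) = ρ / γ → ∀ t : ℝ, (∑ i, s t i) = ρ / γ) :=
  sum_satisfies_logistic_and_plane_invariant_general ρ c e hc he γ hγ s hsol
end

section
/- For the three-species GLV system with γ = (c+e)/2, the product P(t) = s₁(t) s₂(t) s₃(t) is a conserved quantity along any solution lying in the invariant plane s₁ + s₂ + s₃ = ρ/γ with all coordinates positive: dP/dt = 0 on that set. -/
theorem product_conserved_on_invariant_plane (ρ c e : ℝ)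
    (hρ : 0 < ρ) (hc : 0 < c) (he : 0 < e)
    (γ : ℝ) (hγ : γ = (c + e) / 2)
    (s : ℝ → Fin 3 → ℝ)
    (hsol : ∀ t : ℝ, ∀ i : Fin 3,
      HasDerivAt (fun τ => s τ i) (glv3 ρ γ c e (s t) i) t)
    (hplane : ∀ t : ℝ, (∑ i, s t i) = ρ / γ)
    (hpos : ∀ t : ℝ, ∀ i : Fin 3, 0 < s t i) :
    ∀ t : ℝ, HasDerivAt (fun τ => ∏ i, s τ i) 0 t := by
  intro t
  have hγ0 : γ ≠ 0 := by
    rw [hγ]; positivity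
  have h0 := hsol t 0
  have h1 := hsol t 1
  have h2 := hsol t 2
  have hsum : s t 0 + s t 1 + s t 2 = ρ / γ := by
    have := hplane t
    simpa [Fin.sum_univ_three] using this
  have hsum' : γ * (s t 0 + s t 1 + s t 2) = ρ := by
    rw [hsum]; field_simp
  have hD := (h0.mul h1).mul h2
  have hkey : (glv3 ρ γ c e (s t) 0 * s t 1 + s t 0 * glv3 ρ γ c e (s t) 1) * s t 2 +
      s t 0 * s t 1 * glv3 ρ γ c e (s t) 2 = 0 := by
    simp only [glv3, show ((0:Fin 3)+1) = 1 from rfl, show ((0:Fin 3)+2) = 2 from rfl,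
      show ((1:Fin 3)+1) = 2 from rfl, show ((1:Fin 3)+2) = 0 from rfl,
      show ((2:Fin 3)+1) = 0 from rfl, show ((2:Fin 3)+2) = 1 from rfl]
    subst hγ
    linear_combination (-3 * s t 0 * s t 1 * s t 2) * hsum'
  have : HasDerivAt (fun τ => s τ 0 * s τ 1 * s τ 2) 0 t := by
    rw [← hkey]; exact hD
  convert this using 2 with τ
  simp [Fin.prod_univ_three]
end

section
/- For the constant-forcing driven system with δ = 0 and γ_D > (c+e)/2, the coexistence equilibrium with all three coordinates equal to ρ/(γ_D + c + e) is the unique equilibrium in the open positive octant, and it is linearly stable; in particular, the unforced driven unit in the CE-regime admits no other strictly positive equilibria. -/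
open Matrix

section LotkaVolterra

variable {n : Type*} [Fintype n]

def lotkaVolterra (r : n → ℝ) (A : Matrix n n ℝ) (s : n → ℝ) (i : n) : ℝ :=
  s i * (r i - (A *ᵥ s) i)

theorem mulVec_eq_of_lotkaVolterra_eq_zero {r : n → ℝ} {A : Matrix n n ℝ} {s : n → ℝ}
    (hs : ∀ i, 0 < s i) (h : ∀ i, lotkaVolterra r A s i = 0) : A *ᵥ s = r :=
  funext fun i => by
    have := (mul_eq_zero.1 (h i)).resolve_left (hs i).ne'
    linarith

theorem fderiv_lotkaVolterra_apply_single [DecidableEq n] (r : n → ℝ) (A : Matrix n n ℝ)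
    (p : n → ℝ) (i j : n) :
    fderiv ℝ (fun s => lotkaVolterra r A s i) p (Pi.single j 1) =
      (diagonal (r - A *ᵥ p) - diagonal p * A) i j := by
  have hA := ((ContinuousLinearMap.proj i).comp
    (LinearMap.toContinuousLinearMap (toLin' A))).hasFDerivAt (x := p)
  have H : HasFDerivAt (fun s => lotkaVolterra r A s i) _ p :=
    (hasFDerivAt_apply i p).mul ((hasFDerivAt_const (r i) p).sub hA)
  rw [H.fderiv]
  simp [Pi.single_apply, diagonal_apply, neg_add_eq_sub]

end LotkaVolterra

section Definiteness

variable {n : Type*} [Fintype n]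

theorem eq_of_mulVec_eq_of_dotProduct_mulVec_pos {A : Matrix n n ℝ}
    (hA : ∀ x ≠ 0, 0 < x ⬝ᵥ A *ᵥ x) {x y : n → ℝ} (h : A *ᵥ x = A *ᵥ y) : x = y := by
  by_contra hne
  have := hA (x - y) (sub_ne_zero.2 hne)
  rw [mulVec_sub, h, sub_self, dotProduct_zero] at this
  exact this.false

theorem re_star_dotProduct_map_ofReal_mulVec (A : Matrix n n ℝ) (v : n → ℂ) :
    (star v ⬝ᵥ A.map Complex.ofReal *ᵥ v).re =
      (fun i => (v i).re) ⬝ᵥ A *ᵥ (fun i => (v i).re) +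
        (fun i => (v i).im) ⬝ᵥ A *ᵥ (fun i => (v i).im) := by
  simp only [dotProduct, mulVec, Finset.mul_sum, Complex.re_sum, ← Finset.sum_add_distrib]
  refine Finset.sum_congr rfl fun i _ => Finset.sum_congr rfl fun j _ => ?_
  simp [Complex.mul_re, Complex.mul_im]

variable [DecidableEq n]

theorem exists_mulVec_eq_smul_of_mem_spectrum {K : Type*} [Field K] {M : Matrix n n K} {z : K}
    (hz : z ∈ spectrum K M) : ∃ v ≠ 0, M *ᵥ v = z • v := by
  rw [← spectrum_toLin', ← Module.End.hasEigenvalue_iff_mem_spectrum] at hz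
  obtain ⟨v, hv⟩ := hz.exists_hasEigenvector
  exact ⟨v, hv.2, by simpa using hv.apply_eq_smul⟩

theorem re_lt_zero_of_mem_spectrum_of_dotProduct_mulVec_neg {A : Matrix n n ℝ}
    (hA : ∀ x ≠ 0, x ⬝ᵥ A *ᵥ x < 0) {z : ℂ} (hz : z ∈ spectrum ℂ (A.map Complex.ofReal)) :
    z.re < 0 := by
  obtain ⟨v, hv0, hv⟩ := exists_mulVec_eq_smul_of_mem_spectrum hz
  set x : n → ℝ := fun i => (v i).re
  set y : n → ℝ := fun i => (v i).im
  have hxy : x ≠ 0 ∨ y ≠ 0 := by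
    by_contra! h
    exact hv0 (funext fun i => Complex.ext (congrFun h.1 i) (congrFun h.2 i))
  have hA_nonpos : ∀ w, w ⬝ᵥ A *ᵥ w ≤ 0 := fun w => by
    rcases eq_or_ne w 0 with rfl | hw
    · simp
    · exact (hA w hw).le
  have hsq_pos : ∀ w : n → ℝ, w ≠ 0 → 0 < w ⬝ᵥ w := fun w hw => by
    simpa using dotProduct_self_star_pos_iff.2 hw
  have hsq_nonneg : ∀ w : n → ℝ, 0 ≤ w ⬝ᵥ w := fun w => by
    simpa using dotProduct_star_self_nonneg w
  have hform : x ⬝ᵥ A *ᵥ x + y ⬝ᵥ A *ᵥ y < 0 := by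
    rcases hxy with h | h
    · linarith [hA x h, hA_nonpos y]
    · linarith [hA y h, hA_nonpos x]
  have hnorm : 0 < x ⬝ᵥ x + y ⬝ᵥ y := by
    rcases hxy with h | h
    · linarith [hsq_pos x h, hsq_nonneg y]
    · linarith [hsq_pos y h, hsq_nonneg x]
  have hrayleigh : z.re * (x ⬝ᵥ x + y ⬝ᵥ y) = x ⬝ᵥ A *ᵥ x + y ⬝ᵥ A *ᵥ y := by
    rw [← re_star_dotProduct_map_ofReal_mulVec, hv]
    simp only [dotProduct, Pi.smul_apply, smul_eq_mul, Complex.re_sum, Finset.mul_sum,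
      ← Finset.sum_add_distrib]
    refine Finset.sum_congr rfl fun i _ => ?_
    simp only [Pi.star_apply, RCLike.star_def, Complex.mul_re, Complex.mul_im, Complex.conj_re,
      Complex.conj_im, x, y]
    ring
  exact neg_of_mul_neg_left (hrayleigh ▸ hform) hnorm.le

end Definiteness

section Circulant

-- `circulant v i j = v (i - j)`, so the first row of `circulant ![γ, e, c]` is `(γ, c, e)`.
theorem circulant_mulVec_fin_three (γ c e : ℝ) (s : Fin 3 → ℝ) (i : Fin 3) :
    (circulant ![γ, e, c] *ᵥ s) i = γ * s i + c * s (i + 1) + e * s (i + 2) := by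
  fin_cases i <;> simp [mulVec, dotProduct, Fin.sum_univ_three, circulant_apply] <;> ring

theorem dotProduct_circulant_mulVec_pos {γ c e : ℝ} (hsum : 0 < γ + c + e)
    (hγ : (c + e) / 2 < γ) {x : Fin 3 → ℝ} (hx : x ≠ 0) :
    0 < x ⬝ᵥ circulant ![γ, e, c] *ᵥ x := by
  have hform : 6 * (x ⬝ᵥ circulant ![γ, e, c] *ᵥ x) =
      2 * (γ + c + e) * (x 0 + x 1 + x 2) ^ 2 +
        (2 * γ - c - e) * ((x 0 - x 1) ^ 2 + (x 1 - x 2) ^ 2 + (x 2 - x 0) ^ 2) := by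
    simp only [dotProduct, circulant_mulVec_fin_three, Fin.sum_univ_three, Fin.isValue,
      Fin.reduceAdd, zero_add]
    ring
  have hγ' : 0 < 2 * γ - c - e := by linarith
  by_contra! hle
  have hmean : (γ + c + e) * (x 0 + x 1 + x 2) ^ 2 = 0 := by
    nlinarith [mul_nonneg hγ'.le (by positivity :
      0 ≤ (x 0 - x 1) ^ 2 + (x 1 - x 2) ^ 2 + (x 2 - x 0) ^ 2)]
  have hdiff : (2 * γ - c - e) * ((x 0 - x 1) ^ 2 + (x 1 - x 2) ^ 2 + (x 2 - x 0) ^ 2) = 0 := by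
    nlinarith
  simp only [mul_eq_zero, hsum.ne', hγ'.ne', pow_eq_zero_iff two_ne_zero, false_or]
    at hmean hdiff
  refine hx (funext fun i => ?_)
  fin_cases i <;> simp only [Fin.zero_eta, Fin.mk_one, Fin.reduceFinMk, Fin.isValue, Pi.zero_apply] <;>
    nlinarith [sq_nonneg (x 0 - x 1), sq_nonneg (x 1 - x 2), sq_nonneg (x 2 - x 0)]

theorem glv3_eq_lotkaVolterra (ρ γ c e : ℝ) :
    glv3 ρ γ c e = lotkaVolterra (fun _ => ρ) (circulant ![γ, e, c]) := by
  ext s i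
  rw [glv3, lotkaVolterra, circulant_mulVec_fin_three]
  ring

theorem glv3Jac_eq (ρ γ c e : ℝ) (p : Fin 3 → ℝ) :
    glv3Jac ρ γ c e p =
      diagonal ((fun _ => ρ) - circulant ![γ, e, c] *ᵥ p) - diagonal p * circulant ![γ, e, c] := by
  ext i j
  rw [glv3Jac, glv3_eq_lotkaVolterra, fderiv_lotkaVolterra_apply_single]

end Circulant

theorem coexistence_unique_positive_equilibrium_and_stable_general (ρ γD c e : ℝ)
    (hρ : 0 < ρ) (hc : 0 < c) (he : 0 < e)
    (hCE : γD > (c + e) / 2) :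
    let astar : Fin 3 → ℝ := fun _ => ρ / (γD + c + e)
    (∀ i : Fin 3, glv3 ρ γD c e astar i = 0) ∧
    (∀ s : Fin 3 → ℝ, (∀ i, 0 < s i) → (∀ i, glv3 ρ γD c e s i = 0) → s = astar) ∧
    (∀ z ∈ spectrum ℂ ((glv3Jac ρ γD c e astar).map Complex.ofReal), z.re < 0) := by
  intro astar
  set C : Matrix (Fin 3) (Fin 3) ℝ := circulant ![γD, e, c]
  have hsum : 0 < γD + c + e := by linarith
  have hC_pos : ∀ x ≠ 0, 0 < x ⬝ᵥ C *ᵥ x := fun x hx => dotProduct_circulant_mulVec_pos hsum hCE hx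
  have hC_astar : C *ᵥ astar = fun _ => ρ := funext fun i => by
    simp only [C, circulant_mulVec_fin_three, astar]
    field_simp
  refine ⟨fun i => by simp [glv3_eq_lotkaVolterra, lotkaVolterra, C, hC_astar], ?_, ?_⟩
  · intro s hs h
    rw [glv3_eq_lotkaVolterra] at h
    exact eq_of_mulVec_eq_of_dotProduct_mulVec_pos hC_pos
      ((mulVec_eq_of_lotkaVolterra_eq_zero hs h).trans hC_astar.symm)
  · have hJ : glv3Jac ρ γD c e astar = -((ρ / (γD + c + e)) • C) := by
      rw [glv3Jac_eq, hC_astar, sub_self, diagonal_zero', zero_sub, smul_eq_diagonal_mul]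
    rw [hJ]
    refine fun z => re_lt_zero_of_mem_spectrum_of_dotProduct_mulVec_neg fun x hx => ?_
    rw [neg_mulVec, smul_mulVec, dotProduct_neg, dotProduct_smul, smul_eq_mul, neg_lt_zero]
    exact mul_pos (div_pos hρ hsum) (hC_pos x hx)

theorem coexistence_unique_positive_equilibrium_and_stable (ρ γD c e : ℝ)
    (hρ : 0 < ρ) (hγD : 0 < γD) (hc : 0 < c) (he : 0 < e)
    (hCE : γD > (c + e) / 2) :
    let astar : Fin 3 → ℝ := fun _ => ρ / (γD + c + e)
    (∀ i : Fin 3, glv3 ρ γD c e astar i = 0) ∧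
    (∀ s : Fin 3 → ℝ, (∀ i, 0 < s i) → (∀ i, glv3 ρ γD c e s i = 0) → s = astar) ∧
    (∀ z ∈ spectrum ℂ ((glv3Jac ρ γD c e astar).map Complex.ofReal), z.re < 0) :=
  coexistence_unique_positive_equilibrium_and_stable_general ρ γD c e hρ hc he hCE
end
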